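/- arXiv:0901.0141 — 2 statements merged into one kernel-verified Lean document; each statement's English description precedes it below -/
import Mathlib

section
/- Let (A, C, ψ) be an entwining structure. If e ∈ C is a group-like element, then A is a right C-comodule with coaction Δ_A : A → A ⊗ C, a ↦ ψ(e ⊗ a). Dually, if κ : A → k is an algebra map, then C is a right A-module with action c · a = a_α κ(c^α). -/
/-!
STATEMENT 9. For an entwining structure (A, C, ψ): a group-like e ∈ C makes A
a right C-comodule via a ↦ ψ(e ⊗ a); dually, an algebra map κ : A → k makes C
a right A-module via c · a = κ(a_α) c^α.
-/

open TensorProduct LinearMap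

noncomputable section

namespace CGal

variable {k : Type*} [Field k]
variable {A : Type*} [Ring A] [Algebra k A]
variable {C : Type*} [AddCommGroup C] [Module k C] [Coalgebra k C]

/-- The bow-tie axioms of an entwining structure `(A, C, ψ)`. -/
def IsEntwining (ψ : C ⊗[k] A →ₗ[k] A ⊗[k] C) : Prop :=
  -- left pentagon
  (ψ ∘ₗ (lTensor C (LinearMap.mul' k A))
     = (rTensor C (LinearMap.mul' k A))
        ∘ₗ (TensorProduct.assoc k A A C).symm.toLinearMap
        ∘ₗ (lTensor A ψ)
        ∘ₗ (TensorProduct.assoc k A C A).toLinearMap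
        ∘ₗ (rTensor A ψ)
        ∘ₗ (TensorProduct.assoc k C A A).symm.toLinearMap) ∧
  -- left triangle
  (∀ c : C, ψ (c ⊗ₜ[k] (1 : A)) = (1 : A) ⊗ₜ[k] c) ∧
  -- right pentagon
  ((lTensor A (Coalgebra.comul : C →ₗ[k] C ⊗[k] C)) ∘ₗ ψ
     = (TensorProduct.assoc k A C C).toLinearMap
        ∘ₗ (rTensor C ψ)
        ∘ₗ (TensorProduct.assoc k C A C).symm.toLinearMap
        ∘ₗ (lTensor C ψ)
        ∘ₗ (TensorProduct.assoc k C C A).toLinearMap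
        ∘ₗ (rTensor A (Coalgebra.comul : C →ₗ[k] C ⊗[k] C))) ∧
  -- right triangle
  ((TensorProduct.rid k A).toLinearMap
      ∘ₗ (lTensor A (Coalgebra.counit : C →ₗ[k] k)) ∘ₗ ψ
     = (TensorProduct.lid k A).toLinearMap
      ∘ₗ (rTensor A (Coalgebra.counit : C →ₗ[k] k)))

/-- A group-like element of the coalgebra `C`. -/
def IsGrouplike (e : C) : Prop :=
  (Coalgebra.comul : C →ₗ[k] C ⊗[k] C) e = e ⊗ₜ[k] e ∧
  (Coalgebra.counit : C →ₗ[k] k) e = 1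

/-- Comodule axioms for a right `C`-coaction on a `k`-module `M`. -/
def IsCoactionOn {M : Type*} [AddCommGroup M] [Module k M]
    (ρ : M →ₗ[k] M ⊗[k] C) : Prop :=
  (∀ m : M, (TensorProduct.rid k M) ((lTensor M (Coalgebra.counit : C →ₗ[k] k)) (ρ m)) = m) ∧
  (∀ m : M, (rTensor C ρ) (ρ m)
      = (TensorProduct.assoc k M C C).symm
          ((lTensor M (Coalgebra.comul : C →ₗ[k] C ⊗[k] C)) (ρ m)))

theorem entwining_grouplike_coaction_and_character_action
    (ψ : C ⊗[k] A →ₗ[k] A ⊗[k] C) (hψ : IsEntwining ψ) :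
    -- a group-like e yields a right C-coaction on A:
    (∀ e : C, IsGrouplike (k := k) e →
        IsCoactionOn (ψ ∘ₗ ((TensorProduct.mk k C A) e))) ∧
    -- an algebra map κ : A → k yields a right A-action on C:
    (∀ κ : A →ₐ[k] k,
        letI ract : C ⊗[k] A →ₗ[k] C :=
          (TensorProduct.lid k C).toLinearMap ∘ₗ (rTensor C κ.toLinearMap) ∘ₗ ψ
        (∀ c : C, ract (c ⊗ₜ[k] (1 : A)) = c) ∧
        (∀ (c : C) (a a' : A),
            ract (c ⊗ₜ[k] (a * a')) = ract ((ract (c ⊗ₜ[k] a)) ⊗ₜ[k] a'))) := by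
  obtain ⟨hpentL, htriL, hpentR, htriR⟩ := hψ
  constructor
  · intro e he
    constructor
    · intro a
      have h := LinearMap.congr_fun htriR (e ⊗ₜ[k] a)
      simp only [LinearMap.comp_apply, rTensor_tmul, LinearEquiv.coe_coe, lid_tmul,
        he.2, one_smul] at h
      simpa using h
    · intro a
      have key : ∀ t : A ⊗[k] C,
          rTensor C ψ ((TensorProduct.assoc k C A C).symm (e ⊗ₜ[k] t))
            = rTensor C (ψ ∘ₗ TensorProduct.mk k C A e) t := by
        intro t
        induction t using TensorProduct.induction_on with
        | zero => simp
        | tmul b c => simp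
        | add x y hx hy => simp only [tmul_add, map_add, hx, hy]
      have hp := LinearMap.congr_fun hpentR (e ⊗ₜ[k] a)
      simp only [LinearMap.comp_apply, rTensor_tmul, he.1, LinearEquiv.coe_coe,
        assoc_tmul, lTensor_tmul] at hp
      rw [key] at hp
      simp only [LinearMap.comp_apply, mk_apply] at hp ⊢
      rw [hp]
      simp
  · intro κ
    refine ⟨?_, ?_⟩
    · intro c
      simp [htriL c]
    · intro c a a'
      have key : ∀ (b : A) (s : A ⊗[k] C),
          (TensorProduct.lid k C) (rTensor C κ.toLinearMap
            (rTensor C (LinearMap.mul' k A)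
              ((TensorProduct.assoc k A A C).symm (b ⊗ₜ[k] s))))
          = κ b • (TensorProduct.lid k C) (rTensor C κ.toLinearMap s) := by
        intro b s
        induction s using TensorProduct.induction_on with
        | zero => simp
        | tmul b' c2 => simp [mul_smul, mul_comm]
        | add x y hx hy => simp only [tmul_add, map_add, hx, hy, smul_add]
      have main : ∀ t : A ⊗[k] C,
          (TensorProduct.lid k C) (rTensor C κ.toLinearMap
            (rTensor C (LinearMap.mul' k A)
              ((TensorProduct.assoc k A A C).symm (lTensor A ψ
                ((TensorProduct.assoc k A C A) (rTensor A ψ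
                  ((TensorProduct.assoc k C A A).symm (c ⊗ₜ[k] (a ⊗ₜ[k] a')))))))))
          = (TensorProduct.lid k C) (rTensor C κ.toLinearMap
              (ψ ((TensorProduct.lid k C) (rTensor C κ.toLinearMap (ψ (c ⊗ₜ[k] a))) ⊗ₜ[k] a'))) := by
        intro t
        have : ∀ u : A ⊗[k] C,
            (TensorProduct.lid k C) (rTensor C κ.toLinearMap
              (rTensor C (LinearMap.mul' k A)
                ((TensorProduct.assoc k A A C).symm (lTensor A ψ
                  ((TensorProduct.assoc k A C A) (rTensor C (LinearMap.id (M := A)) u ⊗ₜ[k] a'))))))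
            = (TensorProduct.lid k C) (rTensor C κ.toLinearMap
                (ψ ((TensorProduct.lid k C) (rTensor C κ.toLinearMap u) ⊗ₜ[k] a'))) := by
          intro u
          induction u using TensorProduct.induction_on with
          | zero => simp
          | tmul b c1 =>
            simp only [rTensor_tmul, LinearMap.id_apply, LinearEquiv.coe_coe, assoc_tmul,
              lTensor_tmul, lid_tmul]
            rw [key, ← TensorProduct.smul_tmul']
            simp only [map_smul, LinearEquiv.map_smul, AlgHom.toLinearMap_apply]
          | add x y hx hy =>
            simp only [map_add, add_tmul, hx, hy]
        have h2 := this (ψ (c ⊗ₜ[k] a))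
        simpa using h2
      have hp := LinearMap.congr_fun hpentL (c ⊗ₜ[k] (a ⊗ₜ[k] a'))
      simp only [LinearMap.comp_apply, lTensor_tmul, LinearMap.mul'_apply] at hp
      simp only [LinearMap.comp_apply, LinearEquiv.coe_coe]
      rw [hp]
      simpa using main 0


end CGal
end
end

section
/- Let (A, C, ψ) be an entwining structure. Then C := A ⊗ C is an A-coring with: (i) bimodule structure a·(a' ⊗ c)·a'' = a a' ψ(c ⊗ a''); (ii) coproduct Δ_C(a ⊗ c) = (a ⊗ c₍₁₎) ⊗_A (1 ⊗ c₍₂₎); (iii) counit ε_C(a ⊗ c) = ε(c) a. Conversely, if A is an algebra, C a coalgebra, and A ⊗ C carries an A-coring structure with left action a·(a' ⊗ c) = aa' ⊗ c, coproduct and counit as in (ii), (iii), then ψ : C ⊗ A → A ⊗ C, c ⊗ a ↦ (1 ⊗ c)·a, is an entwining map, i.e., (A, C, ψ) is an entwining structure. -/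
/-!
STATEMENT 12 (Takeuchi).  For an entwining structure (A, C, ψ), A ⊗ C is an
A-coring with a·(a' ⊗ c)·a'' = a a' ψ(c ⊗ a''), Δ(a ⊗ c) = (a ⊗ c₁) ⊗_A (1 ⊗ c₂),
ε(a ⊗ c) = ε(c) a; conversely, such an A-coring structure on A ⊗ C yields an
entwining map ψ(c ⊗ a) = (1 ⊗ c)·a.  Here `A ⊗_A`-tensor products are realised
as quotients of `⊗[k]` by the bimodule relations, and equalities in them as
membership of differences of representatives in the relation submodules.
-/

open TensorProduct LinearMap

noncomputable section

namespace CGal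

variable {k : Type*} [Field k]
variable {A : Type*} [Ring A] [Algebra k A]
variable {C : Type*} [AddCommGroup C] [Module k C] [Coalgebra k C]

/-- The right `A`-action on `A ⊗ C` induced by `ψ`:
`(a' ⊗ c)·a'' = a' ψ(c ⊗ a'')`. -/
def ractOf (ψ : C ⊗[k] A →ₗ[k] A ⊗[k] C) :
    (A ⊗[k] C) ⊗[k] A →ₗ[k] A ⊗[k] C :=
  (rTensor C (LinearMap.mul' k A))
    ∘ₗ (TensorProduct.assoc k A A C).symm.toLinearMap
    ∘ₗ (lTensor A ψ)
    ∘ₗ (TensorProduct.assoc k A C A).toLinearMap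

/-- Representative of the coring coproduct:
`a ⊗ c ↦ (a ⊗ c₍₁₎) ⊗ (1 ⊗ c₍₂₎)`. -/
def coringComul : A ⊗[k] C →ₗ[k] (A ⊗[k] C) ⊗[k] (A ⊗[k] C) :=
  (lTensor (A ⊗[k] C) ((TensorProduct.mk k A C) 1))
    ∘ₗ (TensorProduct.assoc k A C C).symm.toLinearMap
    ∘ₗ (lTensor A (Coalgebra.comul : C →ₗ[k] C ⊗[k] C))

/-- The coring counit: `a ⊗ c ↦ ε(c) a`. -/
def coringCounit : A ⊗[k] C →ₗ[k] A :=
  (TensorProduct.rid k A).toLinearMap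
    ∘ₗ (lTensor A (Coalgebra.counit : C →ₗ[k] k))

/-- The kernel of `(A⊗C) ⊗ (A⊗C) → (A⊗C) ⊗_A (A⊗C)`, for the right action `ρ`
on the left factor and the standard left action on the right factor. -/
def corRel (ρ : (A ⊗[k] C) ⊗[k] A →ₗ[k] A ⊗[k] C) :
    Submodule k ((A ⊗[k] C) ⊗[k] (A ⊗[k] C)) :=
  Submodule.span k
    {x | ∃ (u : A ⊗[k] C) (a : A) (v : A ⊗[k] C),
        x = (ρ (u ⊗ₜ[k] a)) ⊗ₜ[k] v - u ⊗ₜ[k] (a • v)}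

/-- Collapse of the left `A`-action: `a ⊗ u ↦ a • u` on `A ⊗ (A ⊗ C)`. -/
def lactCollapse : A ⊗[k] (A ⊗[k] C) →ₗ[k] A ⊗[k] C :=
  (rTensor C (LinearMap.mul' k A))
    ∘ₗ (TensorProduct.assoc k A A C).symm.toLinearMap

/-- `(A ⊗ C, standard left action, ρ, coringComul, coringCounit)` is an
`A`-coring (with `⊗_A`-level equalities phrased on representatives modulo
the relation submodules). -/
def IsCoringOn (ρ : (A ⊗[k] C) ⊗[k] A →ₗ[k] A ⊗[k] C) : Prop :=
  -- ρ is a unital associative right action: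
  (∀ u : A ⊗[k] C, ρ (u ⊗ₜ[k] (1 : A)) = u) ∧
  (∀ (u : A ⊗[k] C) (a a' : A),
      ρ (u ⊗ₜ[k] (a * a')) = ρ ((ρ (u ⊗ₜ[k] a)) ⊗ₜ[k] a')) ∧
  -- left and right actions commute (bimodule):
  (∀ (a : A) (u : A ⊗[k] C) (a'' : A),
      ρ ((a • u) ⊗ₜ[k] a'') = a • ρ (u ⊗ₜ[k] a'')) ∧
  -- the counit is a bimodule map:
  (∀ (a : A) (u : A ⊗[k] C), coringCounit (k := k) (a • u) = a * coringCounit u) ∧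
  (∀ (u : A ⊗[k] C) (a : A), coringCounit (k := k) (ρ (u ⊗ₜ[k] a)) = coringCounit u * a) ∧
  -- the coproduct is a bimodule map (right linearity modulo relations):
  (∀ (a : A) (u : A ⊗[k] C),
      coringComul (k := k) (a • u) = a • coringComul u) ∧
  (∀ (u : A ⊗[k] C) (a : A),
      coringComul (k := k) (ρ (u ⊗ₜ[k] a))
        - (lTensor (A ⊗[k] C) (ρ ∘ₗ ((TensorProduct.mk k (A ⊗[k] C) A).flip a)))
            (coringComul u)
        ∈ corRel ρ) ∧
  -- coassociativity modulo the triple relations: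
  (∀ u : A ⊗[k] C,
      (TensorProduct.assoc k (A ⊗[k] C) (A ⊗[k] C) (A ⊗[k] C))
          ((rTensor (A ⊗[k] C) (coringComul (k := k))) (coringComul u))
        - (lTensor (A ⊗[k] C) (coringComul (k := k))) (coringComul u)
      ∈ (Submodule.span k
           {x | ∃ (v : A ⊗[k] C) (a : A) (w : (A ⊗[k] C) ⊗[k] (A ⊗[k] C)),
              x = (ρ (v ⊗ₜ[k] a)) ⊗ₜ[k] w - v ⊗ₜ[k] (a • w)}
         ⊔ LinearMap.range (lTensor (A ⊗[k] C) (corRel ρ).subtype))) ∧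
  -- counitality:
  (∀ u : A ⊗[k] C,
      lactCollapse (k := k)
        ((rTensor (A ⊗[k] C) (coringCounit (k := k))) (coringComul u)) = u) ∧
  (∀ u : A ⊗[k] C,
      ρ ((lTensor (A ⊗[k] C) (coringCounit (k := k))) (coringComul u)) = u)

end CGal

/-! The coring axioms are checked on pure tensors `a ⊗ c`, where the coring structure maps
reduce to the coalgebra structure of `C` and the entwining map: the right action is
`(a ⊗ c) · b = a ψ(c ⊗ b)`, and the entwining axioms for `ψ` are precisely associativity and
unitality of this action and its compatibility with `Δ_C` and `ε_C`. For the converse, the right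
action of the coring is recovered from `ψ(c ⊗ a) = (1 ⊗ c) · a` by left `A`-linearity, and the
compatibility of `ψ` with `Δ` is read off in `A ⊗ C ⊗ C` through the contraction
`u ⊗ (a ⊗ c) ↦ (u · a) ⊗ c`, which is well defined on `(A ⊗ C) ⊗_A (A ⊗ C)`. -/

namespace CGal

variable {k : Type*} [Field k] {A : Type*} [Ring A] [Algebra k A]
variable {C : Type*} [AddCommGroup C] [Module k C]

@[simp]
lemma lactCollapse_tmul (a : A) (u : A ⊗[k] C) :
    lactCollapse (k := k) (a ⊗ₜ[k] u) = a • u := by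
  induction u using TensorProduct.induction_on with
  | zero => simp
  | tmul b c => simp [lactCollapse, smul_tmul']
  | add u v hu hv => rw [tmul_add, map_add, hu, hv, smul_add]

@[simp]
lemma ractOf_tmul (ψ : C ⊗[k] A →ₗ[k] A ⊗[k] C) (a : A) (c : C) (b : A) :
    ractOf ψ ((a ⊗ₜ[k] c) ⊗ₜ[k] b) = a • ψ (c ⊗ₜ[k] b) := by
  rw [← lactCollapse_tmul]
  simp [ractOf, lactCollapse]

lemma ractOf_smul (ψ : C ⊗[k] A →ₗ[k] A ⊗[k] C) (a : A) (u : A ⊗[k] C) (b : A) :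
    ractOf ψ ((a • u) ⊗ₜ[k] b) = a • ractOf ψ (u ⊗ₜ[k] b) := by
  induction u using TensorProduct.induction_on with
  | zero => simp
  | tmul a' c => rw [smul_tmul', smul_eq_mul, ractOf_tmul, ractOf_tmul, mul_smul]
  | add u v hu hv => rw [smul_add, add_tmul, map_add, add_tmul, map_add, hu, hv, smul_add]

lemma ractOf_one {ψ : C ⊗[k] A →ₗ[k] A ⊗[k] C}
    (hone : ∀ c : C, ψ (c ⊗ₜ[k] (1 : A)) = (1 : A) ⊗ₜ[k] c) (u : A ⊗[k] C) :
    ractOf ψ (u ⊗ₜ[k] (1 : A)) = u := by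
  induction u using TensorProduct.induction_on with
  | zero => simp
  | tmul a c => rw [ractOf_tmul, hone, ← tmul_eq_smul_one_tmul]
  | add u v hu hv => rw [add_tmul, map_add, hu, hv]

lemma ractOf_mul {ψ : C ⊗[k] A →ₗ[k] A ⊗[k] C}
    (hmul : ∀ (c : C) (a a' : A), ψ (c ⊗ₜ[k] (a * a')) = ractOf ψ (ψ (c ⊗ₜ[k] a) ⊗ₜ[k] a'))
    (u : A ⊗[k] C) (a a' : A) :
    ractOf ψ (u ⊗ₜ[k] (a * a')) = ractOf ψ (ractOf ψ (u ⊗ₜ[k] a) ⊗ₜ[k] a') := by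
  induction u using TensorProduct.induction_on with
  | zero => simp
  | tmul a₀ c => rw [ractOf_tmul, hmul, ractOf_tmul, ractOf_smul]
  | add u v hu hv => simp only [add_tmul, map_add, hu, hv]

lemma tmul_sub_tmul_smul_mem_corRel (ρ : (A ⊗[k] C) ⊗[k] A →ₗ[k] A ⊗[k] C)
    (u : A ⊗[k] C) (a : A) (v : A ⊗[k] C) :
    ρ (u ⊗ₜ[k] a) ⊗ₜ[k] v - u ⊗ₜ[k] (a • v) ∈ corRel ρ :=
  Submodule.subset_span ⟨u, a, v, rfl⟩

lemma smul_lTensor_rTensor_sub_mem_corRel (ψ : C ⊗[k] A →ₗ[k] A ⊗[k] C)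
    (a : A) (c : C) (w : A ⊗[k] C) :
    a • lTensor (A ⊗[k] C) (TensorProduct.mk k A C 1)
        (rTensor C ψ ((TensorProduct.assoc k C A C).symm (c ⊗ₜ[k] w)))
      - (a ⊗ₜ[k] c) ⊗ₜ[k] w ∈ corRel (ractOf ψ) := by
  induction w using TensorProduct.induction_on with
  | zero => simp
  | tmul b d =>
    simp only [assoc_symm_tmul, rTensor_tmul, lTensor_tmul, mk_apply]
    rw [smul_tmul', ← ractOf_tmul, tmul_eq_smul_one_tmul b d]
    exact tmul_sub_tmul_smul_mem_corRel _ _ _ _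
  | add w w' hw hw' =>
    rw [tmul_add, map_add, map_add, map_add, smul_add, tmul_add]
    convert add_mem hw hw' using 1; abel

/-- `ψ` moved past both factors of `C ⊗ C`: `(c ⊗ c') ⊗ a ↦ a_{βα} ⊗ c^α ⊗ c'^β`. -/
def entwineTensor (ψ : C ⊗[k] A →ₗ[k] A ⊗[k] C) :
    (C ⊗[k] C) ⊗[k] A →ₗ[k] A ⊗[k] (C ⊗[k] C) :=
  (TensorProduct.assoc k A C C).toLinearMap
    ∘ₗ (rTensor C ψ)
    ∘ₗ (TensorProduct.assoc k C A C).symm.toLinearMap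
    ∘ₗ (lTensor C ψ)
    ∘ₗ (TensorProduct.assoc k C C A).toLinearMap

lemma entwineTensor_tmul (ψ : C ⊗[k] A →ₗ[k] A ⊗[k] C) (c c' : C) (a : A) :
    entwineTensor ψ ((c ⊗ₜ[k] c') ⊗ₜ[k] a)
      = TensorProduct.assoc k A C C
          (rTensor C ψ ((TensorProduct.assoc k C A C).symm (c ⊗ₜ[k] ψ (c' ⊗ₜ[k] a)))) :=
  rfl

def entwiningOf (ρ : (A ⊗[k] C) ⊗[k] A →ₗ[k] A ⊗[k] C) : C ⊗[k] A →ₗ[k] A ⊗[k] C :=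
  ρ ∘ₗ rTensor A (TensorProduct.mk k A C 1)

@[simp]
lemma entwiningOf_tmul (ρ : (A ⊗[k] C) ⊗[k] A →ₗ[k] A ⊗[k] C) (c : C) (a : A) :
    entwiningOf ρ (c ⊗ₜ[k] a) = ρ (((1 : A) ⊗ₜ[k] c) ⊗ₜ[k] a) :=
  rfl

lemma ractOf_entwiningOf {ρ : (A ⊗[k] C) ⊗[k] A →ₗ[k] A ⊗[k] C}
    (hbimod : ∀ (a : A) (u : A ⊗[k] C) (a' : A), ρ ((a • u) ⊗ₜ[k] a') = a • ρ (u ⊗ₜ[k] a')) :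
    ractOf (entwiningOf ρ) = ρ :=
  TensorProduct.ext_threefold fun a c a' => by
    rw [ractOf_tmul, entwiningOf_tmul, ← hbimod, ← tmul_eq_smul_one_tmul]

def contractMiddle (ρ : (A ⊗[k] C) ⊗[k] A →ₗ[k] A ⊗[k] C) :
    (A ⊗[k] C) ⊗[k] (A ⊗[k] C) →ₗ[k] A ⊗[k] (C ⊗[k] C) :=
  (TensorProduct.assoc k A C C).toLinearMap
    ∘ₗ rTensor C ρ
    ∘ₗ (TensorProduct.assoc k (A ⊗[k] C) A C).symm.toLinearMap

@[simp]
lemma contractMiddle_tmul (ρ : (A ⊗[k] C) ⊗[k] A →ₗ[k] A ⊗[k] C)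
    (u : A ⊗[k] C) (a : A) (c : C) :
    contractMiddle ρ (u ⊗ₜ[k] (a ⊗ₜ[k] c))
      = TensorProduct.assoc k A C C (ρ (u ⊗ₜ[k] a) ⊗ₜ[k] c) := by
  simp [contractMiddle]

lemma corRel_le_ker_contractMiddle {ρ : (A ⊗[k] C) ⊗[k] A →ₗ[k] A ⊗[k] C}
    (hmul : ∀ (u : A ⊗[k] C) (a a' : A), ρ (u ⊗ₜ[k] (a * a')) = ρ (ρ (u ⊗ₜ[k] a) ⊗ₜ[k] a')) :
    corRel ρ ≤ ker (contractMiddle ρ) := by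
  refine Submodule.span_le.2 ?_
  rintro _ ⟨u, a, v, rfl⟩
  rw [SetLike.mem_coe, mem_ker, map_sub, sub_eq_zero]
  induction v using TensorProduct.induction_on with
  | zero => simp
  | tmul a' c => rw [smul_tmul', smul_eq_mul, contractMiddle_tmul, contractMiddle_tmul, hmul]
  | add v v' hv hv' => rw [tmul_add, smul_add, tmul_add, map_add, map_add, hv, hv']

lemma contractMiddle_one_tmul (ρ : (A ⊗[k] C) ⊗[k] A →ₗ[k] A ⊗[k] C) (c : C) (w : A ⊗[k] C) :
    contractMiddle ρ (((1 : A) ⊗ₜ[k] c) ⊗ₜ[k] w)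
      = TensorProduct.assoc k A C C
          (rTensor C (entwiningOf ρ) ((TensorProduct.assoc k C A C).symm (c ⊗ₜ[k] w))) := by
  induction w using TensorProduct.induction_on with
  | zero => simp
  | tmul a c' => simp
  | add w w' hw hw' => rw [tmul_add, map_add, hw, hw', tmul_add, map_add, map_add, map_add]

variable [Coalgebra k C]

lemma coringComul_tmul (a : A) (c : C) :
    coringComul (k := k) (a ⊗ₜ[k] c)
      = TensorProduct.map (TensorProduct.mk k A C a) (TensorProduct.mk k A C 1)
          (Coalgebra.comul c) := by
  simp only [coringComul, coe_comp, LinearEquiv.coe_coe, Function.comp_apply, lTensor_tmul]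
  induction Coalgebra.comul (R := k) c using TensorProduct.induction_on with
  | zero => simp
  | tmul c₁ c₂ => simp
  | add x y hx hy => rw [tmul_add, map_add, map_add, hx, hy, map_add]

lemma coringComul_smul (a : A) (u : A ⊗[k] C) :
    coringComul (k := k) (a • u) = a • coringComul (k := k) u := by
  induction u using TensorProduct.induction_on with
  | zero => simp
  | tmul b c =>
    rw [smul_tmul', smul_eq_mul, coringComul_tmul, coringComul_tmul]
    induction Coalgebra.comul (R := k) c using TensorProduct.induction_on with
    | zero => simp
    | tmul c₁ c₂ => simp [smul_tmul']
    | add x y hx hy => rw [map_add, map_add, hx, hy, smul_add]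
  | add u v hu hv => rw [smul_add, map_add, map_add, hu, hv, smul_add]

@[simp]
lemma coringCounit_tmul (a : A) (c : C) :
    coringCounit (k := k) (a ⊗ₜ[k] c) = Coalgebra.counit (R := k) c • a := by
  simp [coringCounit]

lemma coringCounit_smul (a : A) (u : A ⊗[k] C) :
    coringCounit (k := k) (a • u) = a * coringCounit (k := k) u := by
  induction u using TensorProduct.induction_on with
  | zero => simp
  | tmul b c => rw [smul_tmul', smul_eq_mul, coringCounit_tmul, coringCounit_tmul, mul_smul_comm]
  | add u v hu hv => rw [smul_add, map_add, hu, hv, map_add, mul_add]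

lemma isEntwining_iff (ψ : C ⊗[k] A →ₗ[k] A ⊗[k] C) :
    IsEntwining ψ ↔
      (∀ (c : C) (a a' : A), ψ (c ⊗ₜ[k] (a * a')) = ractOf ψ (ψ (c ⊗ₜ[k] a) ⊗ₜ[k] a')) ∧
      (∀ c : C, ψ (c ⊗ₜ[k] (1 : A)) = (1 : A) ⊗ₜ[k] c) ∧
      (∀ (c : C) (a : A), lTensor A Coalgebra.comul (ψ (c ⊗ₜ[k] a))
        = entwineTensor ψ (Coalgebra.comul c ⊗ₜ[k] a)) ∧
      (∀ (c : C) (a : A), coringCounit (ψ (c ⊗ₜ[k] a)) = Coalgebra.counit (R := k) c • a) := by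
  refine and_congr ⟨fun h c a a' => ?_, fun h => ?_⟩ (and_congr Iff.rfl (and_congr
    ⟨fun h c a => congr($h (c ⊗ₜ a)), fun h => TensorProduct.ext' h⟩
    ⟨fun h c a => ?_, fun h => TensorProduct.ext' fun c a => ?_⟩))
  · simpa [ractOf] using congr($h (c ⊗ₜ (a ⊗ₜ a')))
  · refine TensorProduct.ext_threefold' fun c a a' => ?_
    simpa [ractOf] using h c a a'
  · simpa [coringCounit] using congr($h (c ⊗ₜ a))
  · simpa [coringCounit] using h c a

lemma coringCounit_ractOf {ψ : C ⊗[k] A →ₗ[k] A ⊗[k] C}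
    (hcounit : ∀ (c : C) (a : A), coringCounit (ψ (c ⊗ₜ[k] a)) = Coalgebra.counit (R := k) c • a)
    (u : A ⊗[k] C) (a : A) :
    coringCounit (ractOf ψ (u ⊗ₜ[k] a)) = coringCounit u * a := by
  induction u using TensorProduct.induction_on with
  | zero => simp
  | tmul a₀ c =>
    rw [ractOf_tmul, coringCounit_smul, hcounit, coringCounit_tmul, mul_smul_comm, smul_mul_assoc]
  | add u v hu hv => simp only [add_tmul, map_add, hu, hv, add_mul]

lemma coringComul_ractOf_sub_mem_corRel {ψ : C ⊗[k] A →ₗ[k] A ⊗[k] C}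
    (hcomul : ∀ (c : C) (a : A), lTensor A Coalgebra.comul (ψ (c ⊗ₜ[k] a))
      = entwineTensor ψ (Coalgebra.comul c ⊗ₜ[k] a))
    (u : A ⊗[k] C) (a : A) :
    coringComul (ractOf ψ (u ⊗ₜ[k] a))
      - lTensor (A ⊗[k] C) (ractOf ψ ∘ₗ (TensorProduct.mk k (A ⊗[k] C) A).flip a)
          (coringComul u)
      ∈ corRel (ractOf ψ) := by
  induction u using TensorProduct.induction_on with
  | zero => simp
  | tmul a₀ c =>
    have hψ : coringComul (ψ (c ⊗ₜ[k] a))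
        = lTensor (A ⊗[k] C) (TensorProduct.mk k A C 1) ((TensorProduct.assoc k A C C).symm
            (entwineTensor ψ (Coalgebra.comul c ⊗ₜ[k] a))) := by
      rw [← hcomul]
      rfl
    rw [ractOf_tmul, coringComul_smul, hψ, coringComul_tmul]
    induction Coalgebra.comul (R := k) c using TensorProduct.induction_on with
    | zero => simp
    | tmul c₁ c₂ =>
      simp only [entwineTensor_tmul, LinearEquiv.symm_apply_apply, map_tmul, mk_apply,
        lTensor_tmul, coe_comp, Function.comp_apply, flip_apply, ractOf_tmul, one_smul]
      exact smul_lTensor_rTensor_sub_mem_corRel ψ a₀ c₁ _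
    | add z z' hz hz' =>
      rw [add_tmul, map_add, map_add, map_add, smul_add, map_add, map_add]
      convert add_mem hz hz' using 1; abel
  | add u v hu hv =>
    rw [add_tmul, map_add, map_add, map_add, map_add]
    convert add_mem hu hv using 1; abel

lemma assoc_rTensor_coringComul_map (a : A) (z : C ⊗[k] C) :
    TensorProduct.assoc k (A ⊗[k] C) (A ⊗[k] C) (A ⊗[k] C)
        (rTensor (A ⊗[k] C) coringComul
          (TensorProduct.map (TensorProduct.mk k A C a) (TensorProduct.mk k A C 1) z))
      = TensorProduct.map (TensorProduct.mk k A C a)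
          (TensorProduct.map (TensorProduct.mk k A C 1) (TensorProduct.mk k A C 1))
          (TensorProduct.assoc k C C C (rTensor C Coalgebra.comul z)) := by
  induction z using TensorProduct.induction_on with
  | zero => simp
  | tmul c₁ c₂ =>
    simp only [map_tmul, rTensor_tmul, mk_apply, coringComul_tmul]
    induction Coalgebra.comul (R := k) c₁ using TensorProduct.induction_on with
    | zero => simp
    | tmul d₁ d₂ => simp
    | add y y' hy hy' => simp only [map_add, add_tmul, hy, hy']
  | add z z' hz hz' => simp only [map_add, hz, hz']

lemma lTensor_coringComul_map (a : A) (z : C ⊗[k] C) :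
    lTensor (A ⊗[k] C) coringComul
        (TensorProduct.map (TensorProduct.mk k A C a) (TensorProduct.mk k A C 1) z)
      = TensorProduct.map (TensorProduct.mk k A C a)
          (TensorProduct.map (TensorProduct.mk k A C 1) (TensorProduct.mk k A C 1))
          (lTensor C Coalgebra.comul z) := by
  induction z using TensorProduct.induction_on with
  | zero => simp
  | tmul c₁ c₂ => simp [coringComul_tmul]
  | add z z' hz hz' => simp only [map_add, hz, hz']

lemma coringComul_coassoc (u : A ⊗[k] C) :
    TensorProduct.assoc k (A ⊗[k] C) (A ⊗[k] C) (A ⊗[k] C)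
        (rTensor (A ⊗[k] C) coringComul (coringComul u))
      = lTensor (A ⊗[k] C) coringComul (coringComul u) := by
  induction u using TensorProduct.induction_on with
  | zero => simp
  | tmul a c =>
    rw [coringComul_tmul, assoc_rTensor_coringComul_map, lTensor_coringComul_map,
      Coalgebra.coassoc_apply]
  | add u v hu hv => simp only [map_add, hu, hv]

lemma lactCollapse_rTensor_coringCounit_coringComul (u : A ⊗[k] C) :
    lactCollapse (rTensor (A ⊗[k] C) coringCounit (coringComul u)) = u := by
  induction u using TensorProduct.induction_on with
  | zero => simp
  | tmul a c =>
    have h (z : C ⊗[k] C) :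
        lactCollapse (rTensor (A ⊗[k] C) coringCounit
          (TensorProduct.map (TensorProduct.mk k A C a) (TensorProduct.mk k A C 1) z))
          = a ⊗ₜ[k] TensorProduct.lid k C (rTensor C Coalgebra.counit z) := by
      induction z using TensorProduct.induction_on with
      | zero => simp
      | tmul c₁ c₂ => simp [smul_assoc, ← tmul_eq_smul_one_tmul, tmul_smul]
      | add z z' hz hz' => simp only [map_add, hz, hz', tmul_add]
    rw [coringComul_tmul, h, Coalgebra.rTensor_counit_comul, lid_tmul, one_smul]
  | add u v hu hv => simp only [map_add, hu, hv]

lemma apply_lTensor_coringCounit_coringComul {ρ : (A ⊗[k] C) ⊗[k] A →ₗ[k] A ⊗[k] C}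
    (hone : ∀ u : A ⊗[k] C, ρ (u ⊗ₜ[k] (1 : A)) = u) (u : A ⊗[k] C) :
    ρ (lTensor (A ⊗[k] C) coringCounit (coringComul u)) = u := by
  induction u using TensorProduct.induction_on with
  | zero => simp
  | tmul a c =>
    have h (z : C ⊗[k] C) :
        ρ (lTensor (A ⊗[k] C) coringCounit
          (TensorProduct.map (TensorProduct.mk k A C a) (TensorProduct.mk k A C 1) z))
          = a ⊗ₜ[k] TensorProduct.rid k C (lTensor C Coalgebra.counit z) := by
      induction z using TensorProduct.induction_on with
      | zero => simp
      | tmul c₁ c₂ => simp [tmul_smul, hone]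
      | add z z' hz hz' => simp only [map_add, hz, hz', tmul_add]
    rw [coringComul_tmul, h, Coalgebra.lTensor_counit_comul, rid_tmul, one_smul]
  | add u v hu hv => simp only [map_add, hu, hv]

theorem IsEntwining.isCoringOn {ψ : C ⊗[k] A →ₗ[k] A ⊗[k] C} (hψ : IsEntwining ψ) :
    IsCoringOn (ractOf ψ) := by
  obtain ⟨hmul, hone, hcomul, hcounit⟩ := (isEntwining_iff ψ).1 hψ
  refine ⟨ractOf_one hone, ractOf_mul hmul, ractOf_smul ψ, coringCounit_smul,
    coringCounit_ractOf hcounit, coringComul_smul, coringComul_ractOf_sub_mem_corRel hcomul,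
    fun u => ?_, lactCollapse_rTensor_coringCounit_coringComul,
    apply_lTensor_coringCounit_coringComul (ractOf_one hone)⟩
  rw [coringComul_coassoc, sub_self]
  exact zero_mem _

lemma contractMiddle_coringComul {ρ : (A ⊗[k] C) ⊗[k] A →ₗ[k] A ⊗[k] C}
    (hone : ∀ u : A ⊗[k] C, ρ (u ⊗ₜ[k] (1 : A)) = u) (u : A ⊗[k] C) :
    contractMiddle ρ (coringComul u) = lTensor A Coalgebra.comul u := by
  induction u using TensorProduct.induction_on with
  | zero => simp
  | tmul a c =>
    rw [coringComul_tmul, lTensor_tmul]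
    induction Coalgebra.comul (R := k) c using TensorProduct.induction_on with
    | zero => simp
    | tmul c₁ c₂ => simp [hone]
    | add z z' hz hz' => simp only [map_add, hz, hz', tmul_add]
  | add u v hu hv => simp only [map_add, hu, hv]

lemma contractMiddle_lTensor_coringComul_one_tmul (ρ : (A ⊗[k] C) ⊗[k] A →ₗ[k] A ⊗[k] C)
    (c : C) (a : A) :
    contractMiddle ρ (lTensor (A ⊗[k] C) (ρ ∘ₗ (TensorProduct.mk k (A ⊗[k] C) A).flip a)
        (coringComul ((1 : A) ⊗ₜ[k] c)))
      = entwineTensor (entwiningOf ρ) (Coalgebra.comul c ⊗ₜ[k] a) := by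
  rw [coringComul_tmul]
  induction Coalgebra.comul (R := k) c using TensorProduct.induction_on with
  | zero => simp
  | tmul c₁ c₂ =>
    simp only [map_tmul, mk_apply, lTensor_tmul, coe_comp, Function.comp_apply, flip_apply,
      entwineTensor_tmul, entwiningOf_tmul, contractMiddle_one_tmul]
  | add z z' hz hz' => simp only [map_add, add_tmul, hz, hz']

theorem IsCoringOn.isEntwining_entwiningOf {ρ : (A ⊗[k] C) ⊗[k] A →ₗ[k] A ⊗[k] C}
    (hρ : IsCoringOn ρ) : IsEntwining (entwiningOf ρ) := by
  obtain ⟨hone, hmul, hbimod, -, hcounit, -, hcomul, -, -, -⟩ := hρ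
  refine (isEntwining_iff _).2 ⟨fun c a a' => ?_, fun c => ?_, fun c a => ?_, fun c a => ?_⟩
  · rw [ractOf_entwiningOf hbimod, entwiningOf_tmul, entwiningOf_tmul, hmul]
  · rw [entwiningOf_tmul, hone]
  · have h := corRel_le_ker_contractMiddle hmul (hcomul ((1 : A) ⊗ₜ[k] c) a)
    rw [mem_ker, map_sub, sub_eq_zero] at h
    rw [entwiningOf_tmul, ← contractMiddle_coringComul hone, h,
      contractMiddle_lTensor_coringComul_one_tmul]
  · rw [entwiningOf_tmul, hcounit, coringCounit_tmul, smul_mul_assoc, one_mul]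

theorem takeuchi_entwining_coring :
    (∀ ψ : C ⊗[k] A →ₗ[k] A ⊗[k] C, IsEntwining ψ → IsCoringOn (ractOf ψ)) ∧
    (∀ ρ : (A ⊗[k] C) ⊗[k] A →ₗ[k] A ⊗[k] C,
        IsCoringOn ρ →
        IsEntwining (ρ ∘ₗ (rTensor A ((TensorProduct.mk k A C) 1)))) :=
  ⟨fun _ hψ => hψ.isCoringOn, fun _ hρ => hρ.isEntwining_entwiningOf⟩

end CGal
end
end
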